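/- Weakening of pending responses: if a process P is typable as Γ; L ⊢ P ▹ Δ in the liveness typing system and L' ⊆ L, then also Γ; L' ⊢ P ▹ Δ. -/
import Mathlib


/-- Polarised channel names. -/
structure Chan where
  name : ℕ
  pol : Bool
deriving DecidableEq

/-- The dual end of a polarised channel. -/
def Chan.dual (k : Chan) : Chan := ⟨k.name, !k.pol⟩

/-- Data expressions: values (natural numbers, with `0`/`≠ 0` read as the
booleans) and data variables. -/
inductive Expr where
  | val : ℕ → Expr
  | var : ℕ → Expr
deriving DecidableEq

/-- Substitution of a value for a data variable in an expression. -/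
def Expr.subst (e : Expr) (x v : ℕ) : Expr :=
  match e with
  | .val w => .val w
  | .var y => if y = x then .val v else .var y

/-- Evaluation of expressions: `e ⇓ v`. -/
inductive EvalE : Expr → ℕ → Prop where
  | val {v} : EvalE (.val v) v

/-- Processes of the session calculus with responses. -/
inductive Proc where
  | nil : Proc
  | send : Chan → Expr → Proc → Proc
  | recv : Chan → ℕ → Proc → Proc
  | sel : Chan → ℕ → Proc → Proc
  | bra : Chan → List (ℕ × Proc) → Proc
  | par : Proc → Proc → Proc
  | recp : ℕ → Proc → Proc
  | recn : ℕ → ℕ → Expr → Proc → Proc → Proc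
  | pvar : ℕ → List Chan → Proc
  | cond : Expr → Proc → Proc → Proc

/-- Free polarised channel names of a process. -/
def Proc.fn : Proc → Set Chan
  | .nil => ∅
  | .send k _ P => insert k P.fn
  | .recv k _ P => insert k P.fn
  | .sel k _ P => insert k P.fn
  | .bra k bs => insert k (⋃ p : {x // x ∈ bs}, Proc.fn p.1.2)
  | .par P Q => P.fn ∪ Q.fn
  | .recp _ P => P.fn
  | .recn _ _ _ P Q => P.fn ∪ Q.fn
  | .pvar _ ks => {k | k ∈ ks}
  | .cond _ P Q => P.fn ∪ Q.fn
decreasing_by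
  all_goals simp_wf
  all_goals
    first
      | omega
      | (obtain ⟨⟨l2, Q2⟩, hmem⟩ := p
         have := List.sizeOf_lt_of_mem hmem
         simp at this ⊢
         omega)

/-- Free process variables of a process. -/
def Proc.fpv : Proc → Set ℕ
  | .nil => ∅
  | .send _ _ P => P.fpv
  | .recv _ _ P => P.fpv
  | .sel _ _ P => P.fpv
  | .bra _ bs => ⋃ p : {x // x ∈ bs}, Proc.fpv p.1.2
  | .par P Q => P.fpv ∪ Q.fpv
  | .recp X P => P.fpv \ {X}
  | .recn X _ _ P Q => (P.fpv \ {X}) ∪ Q.fpv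
  | .pvar X _ => {X}
  | .cond _ P Q => P.fpv ∪ Q.fpv
decreasing_by
  all_goals simp_wf
  all_goals
    first
      | omega
      | (obtain ⟨⟨l2, Q2⟩, hmem⟩ := p
         have := List.sizeOf_lt_of_mem hmem
         simp at this ⊢
         omega)

/-- Substitution of a data value for a data variable in a process. -/
def Proc.substV (P : Proc) (x v : ℕ) : Proc :=
  match P with
  | .nil => .nil
  | .send k e Q => .send k (e.subst x v) (Q.substV x v)
  | .recv k y Q => .recv k y (if y = x then Q else Q.substV x v)
  | .sel k l Q => .sel k l (Q.substV x v)
  | .bra k bs => .bra k (bs.attach.map fun ⟨⟨l, Q⟩, h⟩ => (l, Q.substV x v))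
  | .par Q R => .par (Q.substV x v) (R.substV x v)
  | .recp X Q => .recp X (Q.substV x v)
  | .recn X i e Q R =>
      .recn X i (e.subst x v) (if i = x then Q else Q.substV x v) (R.substV x v)
  | .pvar X ks => .pvar X ks
  | .cond e Q R => .cond (e.subst x v) (Q.substV x v) (R.substV x v)
decreasing_by
  all_goals simp_wf
  all_goals (try (have := List.sizeOf_lt_of_mem h; simp at this; omega))
  all_goals omega

/-- Capture-avoiding substitution of a process for a process variable,
`P{Q/X}` (with `X⟨k̃⟩{Q/X} = Q`). -/
def Proc.substP (P : Proc) (X : ℕ) (Q : Proc) : Proc :=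
  match P with
  | .nil => .nil
  | .send k e R => .send k e (R.substP X Q)
  | .recv k y R => .recv k y (R.substP X Q)
  | .sel k l R => .sel k l (R.substP X Q)
  | .bra k bs => .bra k (bs.attach.map fun ⟨⟨l, R⟩, h⟩ => (l, R.substP X Q))
  | .par R S => .par (R.substP X Q) (S.substP X Q)
  | .recp Y R => if Y = X then .recp Y R else .recp Y (R.substP X Q)
  | .recn Y i e R S =>
      .recn Y i e (if Y = X then R else R.substP X Q) (S.substP X Q)
  | .pvar Y ks => if Y = X then Q else .pvar Y ks
  | .cond e R S => .cond e (R.substP X Q) (S.substP X Q)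
decreasing_by
  all_goals simp_wf
  all_goals (try (have := List.sizeOf_lt_of_mem h; simp at this; omega))
  all_goals omega

/-- Process transition labels:
`k!v`, `k?v`, `k⊕l`, `k&l`, `τ`, `τ:l`. -/
inductive PLabel where
  | out : Chan → ℕ → PLabel
  | inp : Chan → ℕ → PLabel
  | sel : Chan → ℕ → PLabel
  | bra : Chan → ℕ → PLabel
  | tau : PLabel
  | tauL : ℕ → PLabel

/-- The subject of a process transition label (`τ` labels have no channel
subject). -/
def PLabel.subj : PLabel → Option Chan
  | .out k _ => some k
  | .inp k _ => some k
  | .sel k _ => some k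
  | .bra k _ => some k
  | .tau => none
  | .tauL _ => none

/-- The labelled transition semantics of processes (Figure 1 of the paper),
including the symmetric versions of ParL and Com1/Com2. -/
inductive PStep : Proc → PLabel → Proc → Prop where
  | out {k e v P} : EvalE e v → k.dual ∉ P.fn →
      PStep (.send k e P) (.out k v) P
  | inp {k x v P} : k.dual ∉ P.fn →
      PStep (.recv k x P) (.inp k v) (P.substV x v)
  | sel {k l P} : k.dual ∉ P.fn →
      PStep (.sel k l P) (.sel k l) P
  | bra {k bs l P} : (l, P) ∈ bs → k.dual ∉ P.fn →
      PStep (.bra k bs) (.bra k l) P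
  | parL {P lbl Q P'} : PStep P lbl P' →
      (∀ k, lbl.subj = some k → k.dual ∉ Q.fn) →
      PStep (.par P Q) lbl (.par P' Q)
  | parR {P lbl Q Q'} : PStep Q lbl Q' →
      (∀ k, lbl.subj = some k → k.dual ∉ P.fn) →
      PStep (.par P Q) lbl (.par P Q')
  | com1 {P Q P' Q' k v} : PStep P (.out k.dual v) P' → PStep Q (.inp k v) Q' →
      PStep (.par P Q) .tau (.par P' Q')
  | com1' {P Q P' Q' k v} : PStep P (.inp k v) P' → PStep Q (.out k.dual v) Q' →
      PStep (.par P Q) .tau (.par P' Q')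
  | com2 {P Q P' Q' k l} : PStep P (.sel k.dual l) P' → PStep Q (.bra k l) Q' →
      PStep (.par P Q) (.tauL l) (.par P' Q')
  | com2' {P Q P' Q' k l} : PStep P (.bra k l) P' → PStep Q (.sel k.dual l) Q' →
      PStep (.par P Q) (.tauL l) (.par P' Q')
  | recp {X P lbl Q} : PStep (P.substP X (.recp X P)) lbl Q →
      PStep (.recp X P) lbl Q
  | prec0 {X i e P Q lbl R} : EvalE e 0 → PStep Q lbl R →
      PStep (.recn X i e P Q) lbl R
  | precN {X i e n P Q lbl R} : EvalE e (n + 1) →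
      PStep ((P.substV i n).substP X (.recn X i (.val n) P Q)) lbl R →
      PStep (.recn X i e P Q) lbl R
  | condT {e v P Q lbl P'} : EvalE e v → v ≠ 0 → PStep P lbl P' →
      PStep (.cond e P Q) lbl P'
  | condF {e P Q lbl Q'} : EvalE e 0 → PStep Q lbl Q' →
      PStep (.cond e P Q) lbl Q'

/-- Session types with responses. -/
inductive RType where
  | end_ : RType
  | send : RType → RType
  | recv : RType → RType
  | branch : List (ℕ × Set ℕ × RType) → RType
  | select : List (ℕ × Set ℕ × RType) → RType

/-- A session typing environment: a partial map from polarised channel names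
to session types with responses. -/
def SEnv := Chan → Option RType

/-- The singleton environment `k : T`. -/
def SEnv.single (k : Chan) (T : RType) : SEnv :=
  fun k' => if k' = k then some T else none

/-- Union `Δ, Δ'` of environments (intended for disjoint domains). -/
def SEnv.union (Δ Δ' : SEnv) : SEnv :=
  fun k => (Δ k).orElse (fun _ => Δ' k)

/-- Disjointness of environment domains. -/
def SEnv.Disj (Δ Δ' : SEnv) : Prop := ∀ k, Δ k = none ∨ Δ' k = none

/-- The domain of an environment. -/
def SEnv.dom (Δ : SEnv) : Set Chan := {k | Δ k ≠ none}

/-- An environment is completed when every type in it is `end`. -/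
def SEnv.Completed (Δ : SEnv) : Prop :=
  ∀ k T, Δ k = some T → T = RType.end_

/-- Information recorded for a process variable by the liveness typing
system: `(A, I, Δ)` (accumulated selections, invariant, session environment)
for general recursion, or `(L, Δ)` for primitive recursion. -/
inductive PVInfo where
  | gen : Set ℕ → Set ℕ → SEnv → PVInfo
  | prim : Set ℕ → SEnv → PVInfo

/-- Process variable environments `Γ`. -/
def PEnv := ℕ → Option PVInfo

/-- `Γ + l`: add the selected label `l` to every accumulator in `Γ`. -/
def PEnv.addAcc (Γ : PEnv) (l : ℕ) : PEnv :=
  fun X => match Γ X with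
    | some (.gen A I Δ) => some (.gen (A ∪ {l}) I Δ)
    | o => o

/-- `Γ, X : t` (extension/update of a process variable environment). -/
def PEnv.update (Γ : PEnv) (X : ℕ) (t : PVInfo) : PEnv :=
  fun Y => if Y = X then some t else Γ Y

/-- The empty process variable environment. -/
def PEnv.empty : PEnv := fun _ => none

/-- The liveness typing system `Γ; L ⊢ P ▹ Δ` (Figure 4 of the paper). -/
inductive Typed : PEnv → Set ℕ → Proc → SEnv → Prop where
  | inact {Γ Δ} : SEnv.Completed Δ → Typed Γ ∅ .nil Δ
  | out {Γ L k e P Δ T} : Δ k = none →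
      Typed Γ L P (SEnv.union Δ (SEnv.single k T)) →
      Typed Γ L (.send k e P) (SEnv.union Δ (SEnv.single k (.send T)))
  | inp {Γ L k x P Δ T} : Δ k = none →
      Typed Γ L P (SEnv.union Δ (SEnv.single k T)) →
      Typed Γ L (.recv k x P) (SEnv.union Δ (SEnv.single k (.recv T)))
  | bra {Γ : PEnv} {L : Set ℕ} {k : Chan} {bs : List (ℕ × Proc)}
      {ts : List (ℕ × Set ℕ × RType)} {Δ : SEnv} : Δ k = none → bs.length = ts.length →
      (∀ (i : ℕ) (l : ℕ) (P : Proc) (l' : ℕ) (L' : Set ℕ) (T : RType),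
        bs[i]? = some (l, P) → ts[i]? = some (l', L', T) → l = l') →
      (∀ (i : ℕ) (l : ℕ) (P : Proc) (l' : ℕ) (L' : Set ℕ) (T : RType),
        bs[i]? = some (l, P) → ts[i]? = some (l', L', T) →
        Typed (Γ.addAcc l) ((L \ {l}) ∪ L') P (SEnv.union Δ (SEnv.single k T))) →
      Typed Γ L (.bra k bs) (SEnv.union Δ (SEnv.single k (.branch ts)))
  | sel {Γ L k l P Δ ts Ll T} : Δ k = none → (l, Ll, T) ∈ ts →
      Typed (Γ.addAcc l) ((L \ {l}) ∪ Ll) P (SEnv.union Δ (SEnv.single k T)) →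
      Typed Γ L (.sel k l P) (SEnv.union Δ (SEnv.single k (.select ts)))
  | par {Γ L₁ L₂ P Q Δ₁ Δ₂} : SEnv.Disj Δ₁ Δ₂ →
      Typed Γ L₁ P Δ₁ → Typed Γ L₂ Q Δ₂ →
      Typed Γ (L₁ ∪ L₂) (.par P Q) (SEnv.union Δ₁ Δ₂)
  | varG {Γ X A I Δ L ks} : Γ X = some (.gen A I Δ) → L ⊆ I → I ⊆ A →
      SEnv.dom Δ = {k | k ∈ ks} →
      Typed Γ L (.pvar X ks) Δ
  | varP {Γ X L' Δ L ks} : Γ X = some (.prim L' Δ) → L ⊆ L' →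
      SEnv.dom Δ = {k | k ∈ ks} →
      Typed Γ L (.pvar X ks) Δ
  | recp {Γ X I P Δ L} : Typed (Γ.update X (.gen ∅ I Δ)) I P Δ → L ⊆ I →
      Typed Γ L (.recp X P) Δ
  | recn {Γ X i e P Q Δ L L'} :
      Typed (Γ.update X (.prim L' Δ)) L' P Δ →
      Typed Γ L' Q Δ → L ⊆ L' →
      Typed Γ L (.recn X i e P Q) Δ
  | cond {Γ L e P Q Δ} : Typed Γ L P Δ → Typed Γ L Q Δ →
      Typed Γ L (.cond e P Q) Δ

/-- Weakening of pending responses: if `Γ; L ⊢ P ▹ Δ` and `L' ⊆ L`, then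
`Γ; L' ⊢ P ▹ Δ`. -/
theorem typed_weaken {Γ : PEnv} {L L' : Set ℕ} {P : Proc} {Δ : SEnv}
    (h : Typed Γ L P Δ) (hsub : L' ⊆ L) : Typed Γ L' P Δ := by
  induction h generalizing L' with
  | inact hc =>
    have : L' = ∅ := Set.subset_empty_iff.mp hsub
    subst this; exact .inact hc
  | out hk _ ih => exact .out hk (ih hsub)
  | inp hk _ ih => exact .inp hk (ih hsub)
  | bra hk hlen hlbl _ ih =>
    refine .bra hk hlen hlbl ?_
    intro i l P l'' L'' T hb ht
    exact ih i l P l'' L'' T hb ht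
      (Set.union_subset_union_left _ (Set.diff_subset_diff_left hsub))
  | sel hk hmem _ ih =>
    exact .sel hk hmem
      (ih (Set.union_subset_union_left _ (Set.diff_subset_diff_left hsub)))
  | @par _ L₁ L₂ _ _ _ _ hdisj h1 h2 ih1 ih2 =>
    have : L' = (L' ∩ L₁) ∪ (L' ∩ L₂) := by
      rw [← Set.inter_union_distrib_left, Set.inter_eq_left.mpr hsub]
    rw [this]
    exact .par hdisj (ih1 Set.inter_subset_right) (ih2 Set.inter_subset_right)
  | varG hX hLI hIA hdom => exact .varG hX (hsub.trans hLI) hIA hdom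
  | varP hX hLL hdom => exact .varP hX (hsub.trans hLL) hdom
  | recp hb hLI ih => exact .recp hb (hsub.trans hLI)
  | recn hb hc hLL ih1 ih2 => exact .recn hb hc (hsub.trans hLL)
  | cond _ _ ih1 ih2 => exact .cond (ih1 hsub) (ih2 hsub)
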